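/- Fix δ ≥ 0, a symbol a of order 0, and the bump β, and set b = √2 sin((θ₁−θ₂+π)/2). For j ≥ 1 define H(r₁,r₂;θ₁−θ₂) = 2^{−j(3/2+δ)} β(r₁+r₂) ∫₀^∞ e^{i 2^j (r₁ r₂/(r₁+r₂)) s²} ψ_{3,m}(s) ds, where ψ_{3,m}(s) = (r₁+r₂)^{−3/2−δ} a(2^j(r₁+r₂)) · sin(θ₁−θ₂+π) / (s²/2 + 2 sin²((θ₁−θ₂+π)/2)). Let χ ∈ C_c^∞(ℝ) be an even bump function supported in [−ε, ε] with 0 < ε ≪ 1 sufficiently small. Then there is a constant C, independent of j, r₁, r₂, θ₁, θ₂, such that |(1 − χ(b)) H(r₁,r₂;θ₁−θ₂)| ≤ C 2^{−j(3/2+δ)} (1 + 2^j r₁ r₂)^{−1/2} for all j ≥ 1. -/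

import Mathlib

open MeasureTheory Real Set

noncomputable section

/-- A symbol of order `0` on `(0, ∞)`. -/
def IsSymbol0 (a : ℝ → ℂ) : Prop :=
  ContDiffOn ℝ (⊤ : ℕ∞) a (Set.Ioi 0) ∧ (∃ M : ℝ, ∀ r > (0 : ℝ), ‖a r‖ ≤ M) ∧
    ∀ N : ℕ, ∃ C : ℝ, ∀ r > (0 : ℝ),
      ‖iteratedDerivWithin N a (Set.Ioi 0) r‖ ≤ C * r ^ (-(N : ℝ))

/-- `ψ_{3,m}(s)`, with `φ = θ₁ - θ₂`. -/
def psi3m (δ : ℝ) (a : ℝ → ℂ) (j : ℕ) (r₁ r₂ φ s : ℝ) : ℂ :=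
  (((r₁ + r₂) ^ (-(3 / 2 + δ)) : ℝ) : ℂ) * a ((2 : ℝ) ^ (j : ℝ) * (r₁ + r₂)) *
    ((Real.sin (φ + Real.pi) /
        (s ^ 2 / 2 + 2 * Real.sin ((φ + Real.pi) / 2) ^ 2) : ℝ) : ℂ)

/-- The kernel `H` with quadratic phase. -/
def Hker (δ : ℝ) (a : ℝ → ℂ) (β : ℝ → ℝ) (j : ℕ) (r₁ r₂ φ : ℝ) : ℂ :=
  (((2 : ℝ) ^ (-(j : ℝ) * (3 / 2 + δ)) : ℝ) : ℂ) * ((β (r₁ + r₂) : ℝ) : ℂ) *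
    ∫ s in Set.Ioi (0 : ℝ),
      Complex.exp (Complex.I *
        (((2 : ℝ) ^ (j : ℝ) * (r₁ * r₂ / (r₁ + r₂)) * s ^ 2 : ℝ) : ℂ)) *
        psi3m δ a j r₁ r₂ φ s

/-- `b = √2 sin((θ₁ - θ₂ + π)/2)`, as a function of `φ = θ₁ - θ₂`. -/
def bb (φ : ℝ) : ℝ := Real.sqrt 2 * Real.sin ((φ + Real.pi) / 2)


-- integrability of 1/(s^2/2+c) on Ioi 0
lemma intOn_inv {c : ℝ} (hc : 0 < c) :
    IntegrableOn (fun s : ℝ => (s ^ 2 / 2 + c)⁻¹) (Ioi 0) := by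
  have hne : ∀ s : ℝ, s ^ 2 / 2 + c ≠ 0 := fun s => by positivity
  have hcont : Continuous fun s : ℝ => (s ^ 2 / 2 + c)⁻¹ := by
    exact (continuous_pow 2 |>.div_const 2 |>.add continuous_const).inv₀ hne
  have h1 : IntegrableOn (fun s : ℝ => (s ^ 2 / 2 + c)⁻¹) (Ioc 0 1) :=
    hcont.integrableOn_Ioc
  have h2 : IntegrableOn (fun s : ℝ => (s ^ 2 / 2 + c)⁻¹) (Ioi 1) := by
    have hbig : IntegrableOn (fun s : ℝ => 2 * s ^ (-2 : ℝ)) (Ioi 1) :=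
      (integrableOn_Ioi_rpow_of_lt (by norm_num) one_pos).const_mul 2
    refine hbig.mono' (hcont.aestronglyMeasurable.restrict) ?_
    filter_upwards [ae_restrict_mem measurableSet_Ioi] with s hs
    have hs1 : (1:ℝ) ≤ s := le_of_lt hs
    have hs0 : (0:ℝ) < s := lt_of_lt_of_le one_pos hs1
    have h2s : s ^ (-2:ℝ) = (s ^ 2)⁻¹ := by
      rw [show (-2:ℝ) = -((2:ℕ):ℝ) by norm_num, Real.rpow_neg hs0.le, Real.rpow_natCast]
    rw [Real.norm_eq_abs, abs_of_pos (by positivity), h2s,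
      show (2:ℝ) * (s ^ 2)⁻¹ = (s ^ 2 / 2)⁻¹ by field_simp]
    exact inv_anti₀ (by positivity) (by linarith)
  have : Ioi (0:ℝ) = Ioc 0 1 ∪ Ioi 1 := (Ioc_union_Ioi_eq_Ioi zero_le_one).symm
  rw [this]
  exact h1.union h2

end

noncomputable section B
open MeasureTheory Real Set

lemma int_inv_le {c : ℝ} (hc : 0 < c) :
    ∫ s in Ioi (0:ℝ), (s ^ 2 / 2 + c)⁻¹ ≤ 1 / c + 2 := by
  have hI : IntegrableOn (fun s : ℝ => (s ^ 2 / 2 + c)⁻¹) (Ioi 0) := intOn_inv hc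
  have hsplit : Ioi (0:ℝ) = Ioc 0 1 ∪ Ioi 1 := (Ioc_union_Ioi_eq_Ioi zero_le_one).symm
  have hdisj : Disjoint (Ioc (0:ℝ) 1) (Ioi 1) := by
    rw [Set.disjoint_left]; rintro x hx h2; exact absurd hx.2 (not_le.mpr h2)
  rw [hsplit, setIntegral_union hdisj measurableSet_Ioi (hI.mono_set (by rw[hsplit]; exact subset_union_left)) (hI.mono_set (by rw[hsplit]; exact subset_union_right))]
  have h1 : ∫ s in Ioc (0:ℝ) 1, (s ^ 2 / 2 + c)⁻¹ ≤ 1 / c := by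
    have := setIntegral_mono_on (g := fun _ : ℝ => 1/c) (hI.mono_set (by rw[hsplit]; exact subset_union_left))
      (integrableOn_const (by simp : volume (Ioc (0:ℝ) 1) ≠ ⊤))
      measurableSet_Ioc (fun s hs => by
        rw [one_div]
        exact inv_anti₀ hc (by nlinarith [sq_nonneg s]))
    calc _ ≤ ∫ _ in Ioc (0:ℝ) 1, 1/c := this
    _ = 1/c := by simp
  have h2 : ∫ s in Ioi (1:ℝ), (s ^ 2 / 2 + c)⁻¹ ≤ 2 := by
    have hb : IntegrableOn (fun s : ℝ => 2 * s ^ (-2 : ℝ)) (Ioi 1) :=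
      (integrableOn_Ioi_rpow_of_lt (by norm_num) one_pos).const_mul 2
    have := setIntegral_mono_on (hI.mono_set (by rw[hsplit]; exact subset_union_right))
      hb measurableSet_Ioi (fun s hs => by
        have hs1 : (1:ℝ) ≤ s := le_of_lt hs
        have hs0 : (0:ℝ) < s := lt_of_lt_of_le one_pos hs1
        have h2s : s ^ (-2:ℝ) = (s ^ 2)⁻¹ := by
          rw [show (-2:ℝ) = -((2:ℕ):ℝ) by norm_num, Real.rpow_neg hs0.le, Real.rpow_natCast]
        rw [h2s, show (2:ℝ) * (s ^ 2)⁻¹ = (s ^ 2 / 2)⁻¹ by field_simp]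
        exact inv_anti₀ (by positivity) (by linarith))
    calc _ ≤ ∫ s in Ioi (1:ℝ), 2 * s ^ (-2:ℝ) := this
    _ = 2 * ∫ s in Ioi (1:ℝ), s ^ (-2:ℝ) := by rw [integral_const_mul]
    _ ≤ 2 := by
        rw [integral_Ioi_rpow_of_lt (by norm_num) one_pos]
        norm_num
  linarith

lemma exp_int {a : ℝ} (ha : 0 < a) :
    ∫ t in Ioi (0:ℝ), Real.exp (-(a * t)) = a⁻¹ := by
  have := integral_comp_mul_left_Ioi (fun x => Real.exp (-x)) 0 ha
  simp only [mul_zero] at this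
  rw [this, integral_exp_neg_Ioi_zero, smul_eq_mul, mul_one]

end B

noncomputable section C
open MeasureTheory Real Set Complex

def Fker (c lam : ℝ) (s t : ℝ) : ℂ :=
  Complex.exp ((Complex.I * lam - (t:ℂ)/2) * (s:ℂ) ^ 2) * Complex.exp (-(c:ℂ) * t)

lemma Fker_norm (c lam s t : ℝ) : ‖Fker c lam s t‖ = Real.exp (-((s ^ 2 / 2 + c) * t)) := by
  unfold Fker
  simp only [norm_mul, Complex.norm_exp]
  rw [← Real.exp_add]
  congr 1
  simp [Complex.mul_re, Complex.mul_im, ← Complex.ofReal_pow]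
  ring

lemma Fker_cont (c lam : ℝ) : Continuous (Function.uncurry (Fker c lam)) := by
  unfold Fker Function.uncurry
  apply Continuous.mul
  · apply Complex.continuous_exp.comp
    fun_prop
  · apply Complex.continuous_exp.comp
    fun_prop

lemma Fker_integrable {c lam : ℝ} (hc : 0 < c) :
    Integrable (Function.uncurry (Fker c lam))
      ((volume.restrict (Ioi (0:ℝ))).prod (volume.restrict (Ioi (0:ℝ)))) := by
  rw [integrable_prod_iff (Fker_cont c lam).aestronglyMeasurable]
  constructor
  · filter_upwards with s
    have hpos : 0 < s ^ 2 / 2 + c := by positivity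
    refine (Integrable.mono' ((exp_neg_integrableOn_Ioi 0 hpos)) ?_ ?_)
    · exact ((Fker_cont c lam).comp (by fun_prop : Continuous fun t : ℝ => (s, t))).aestronglyMeasurable
    · filter_upwards with t
      show ‖Fker c lam s t‖ ≤ _
      rw [Fker_norm, neg_mul]
  · have heq : (fun s : ℝ => ∫ t in Ioi (0:ℝ), ‖Function.uncurry (Fker c lam) (s, t)‖) =
        fun s : ℝ => (s ^ 2 / 2 + c)⁻¹ := by
      funext s
      have hpos : 0 < s ^ 2 / 2 + c := by positivity
      have h0 : (fun t : ℝ => ‖Function.uncurry (Fker c lam) (s, t)‖) =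
          fun t : ℝ => Real.exp (-((s ^ 2 / 2 + c) * t)) := by
        funext t; exact Fker_norm c lam s t
      rw [show (∫ t in Ioi (0:ℝ), ‖Function.uncurry (Fker c lam) (s, t)‖) =
        ∫ t in Ioi (0:ℝ), Real.exp (-((s ^ 2 / 2 + c) * t)) from by rw [h0],
        exp_int hpos]
    rw [heq]
    exact intOn_inv hc

lemma key_rep {c lam : ℝ} (hc : 0 < c) (hlam : 0 < lam) :
    (∫ s in Ioi (0:ℝ), Complex.exp (Complex.I * lam * (s:ℂ) ^ 2) * (((s ^ 2 / 2 + c)⁻¹ : ℝ) : ℂ)) =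
      ∫ t in Ioi (0:ℝ),
        (↑π / (((t:ℂ)/2) - Complex.I * lam)) ^ (1/2 : ℂ) / 2 * Complex.exp (-(c:ℂ) * t) := by
  have hinner : ∀ s : ℝ,
      Complex.exp (Complex.I * lam * (s:ℂ) ^ 2) * (((s ^ 2 / 2 + c)⁻¹ : ℝ) : ℂ) =
        ∫ t in Ioi (0:ℝ), Fker c lam s t := by
    intro s
    have hpos : 0 < s ^ 2 / 2 + c := by positivity
    have h1 : ∀ t : ℝ, Fker c lam s t =
        Complex.exp (Complex.I * lam * (s:ℂ) ^ 2) *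
          Complex.exp (-(((s ^ 2 / 2 + c : ℝ)):ℂ) * t) := by
      intro t
      unfold Fker
      rw [← Complex.exp_add, ← Complex.exp_add]
      congr 1
      push_cast
      ring
    rw [show (∫ t in Ioi (0:ℝ), Fker c lam s t) = ∫ t in Ioi (0:ℝ),
        Complex.exp (Complex.I * lam * (s:ℂ) ^ 2) *
          Complex.exp (-(((s ^ 2 / 2 + c : ℝ)):ℂ) * t) from by simp only [h1]]
    rw [integral_const_mul]
    congr 1
    have h2 : ∀ t : ℝ, Complex.exp (-(((s ^ 2 / 2 + c : ℝ)):ℂ) * t) =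
        ((Real.exp (-((s ^ 2 / 2 + c) * t)) : ℝ) : ℂ) := by
      intro t
      rw [Complex.ofReal_exp]
      congr 1
      push_cast
      ring
    rw [show (∫ t in Ioi (0:ℝ), Complex.exp (-(((s ^ 2 / 2 + c : ℝ)):ℂ) * t)) =
        ∫ t in Ioi (0:ℝ), ((Real.exp (-((s ^ 2 / 2 + c) * t)) : ℝ) : ℂ) from by
          simp only [h2]]
    rw [show (∫ t in Ioi (0:ℝ), ((Real.exp (-((s ^ 2 / 2 + c) * t)) : ℝ) : ℂ)) =
        (((∫ t in Ioi (0:ℝ), Real.exp (-((s ^ 2 / 2 + c) * t))) : ℝ) : ℂ) from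
          integral_ofReal, exp_int hpos]
  calc (∫ s in Ioi (0:ℝ), Complex.exp (Complex.I * lam * (s:ℂ) ^ 2) *
        (((s ^ 2 / 2 + c)⁻¹ : ℝ) : ℂ))
      = ∫ s in Ioi (0:ℝ), ∫ t in Ioi (0:ℝ), Fker c lam s t := by simp only [hinner]
    _ = ∫ t in Ioi (0:ℝ), ∫ s in Ioi (0:ℝ), Fker c lam s t :=
        integral_integral_swap (Fker_integrable hc)
    _ = _ := by
        refine setIntegral_congr_fun measurableSet_Ioi fun t ht => ?_
        have hbre : (0:ℝ) < ((t:ℂ)/2 - Complex.I * lam).re := by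
          simp only [Complex.sub_re, Complex.div_re, Complex.mul_re, Complex.I_re,
            Complex.ofReal_re, Complex.I_im, Complex.ofReal_im]
          norm_num
          exact ht
        have h3 : ∀ s : ℝ, Fker c lam s t =
            Complex.exp (-((t:ℂ)/2 - Complex.I * lam) * (s:ℂ) ^ 2) *
              Complex.exp (-(c:ℂ) * t) := by
          intro s
          unfold Fker
          congr 2
          ring
        rw [show (∫ s in Ioi (0:ℝ), Fker c lam s t) = ∫ s in Ioi (0:ℝ),
            Complex.exp (-((t:ℂ)/2 - Complex.I * lam) * (s:ℂ) ^ 2) *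
              Complex.exp (-(c:ℂ) * t) from by simp only [h3]]
        rw [integral_mul_const, integral_gaussian_complex_Ioi hbre]

end C

noncomputable section D
open MeasureTheory Real Set Complex

lemma key_triv {c : ℝ} (lam : ℝ) (hc : 0 < c) :
    ‖∫ s in Ioi (0:ℝ), Complex.exp (Complex.I * lam * (s:ℂ) ^ 2) *
        (((s ^ 2 / 2 + c)⁻¹ : ℝ) : ℂ)‖ ≤ 1 / c + 2 := by
  refine le_trans (norm_integral_le_integral_norm _) ?_
  have hptw : ∀ s : ℝ, ‖Complex.exp (Complex.I * lam * (s:ℂ) ^ 2) *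
      (((s ^ 2 / 2 + c)⁻¹ : ℝ) : ℂ)‖ = (s ^ 2 / 2 + c)⁻¹ := by
    intro s
    rw [norm_mul]
    have h1 : ‖Complex.exp (Complex.I * lam * (s:ℂ) ^ 2)‖ = 1 := by
      rw [Complex.norm_exp]
      have : (Complex.I * lam * (s:ℂ) ^ 2).re = 0 := by
        simp [Complex.mul_re, Complex.mul_im, ← Complex.ofReal_pow]
      rw [this, Real.exp_zero]
    rw [h1, one_mul, Complex.norm_real, Real.norm_eq_abs]
    exact abs_of_nonneg (by positivity)
  rw [show (∫ s in Ioi (0:ℝ), ‖Complex.exp (Complex.I * lam * (s:ℂ) ^ 2) *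
      (((s ^ 2 / 2 + c)⁻¹ : ℝ) : ℂ)‖) = ∫ s in Ioi (0:ℝ), (s ^ 2 / 2 + c)⁻¹ from by
        simp only [hptw]]
  exact int_inv_le hc

lemma key_dec {c lam : ℝ} (hc : 0 < c) (hlam : 0 < lam) :
    ‖∫ s in Ioi (0:ℝ), Complex.exp (Complex.I * lam * (s:ℂ) ^ 2) *
        (((s ^ 2 / 2 + c)⁻¹ : ℝ) : ℂ)‖ ≤ Real.sqrt π / (2 * c * Real.sqrt lam) := by
  rw [key_rep hc hlam]
  have hg : Integrable (fun t : ℝ => (Real.sqrt π / Real.sqrt lam / 2) * Real.exp (-(c * t)))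
      (volume.restrict (Ioi 0)) := by
    refine Integrable.const_mul ?_ _
    have h := exp_neg_integrableOn_Ioi 0 hc
    simp only [neg_mul] at h
    exact h
  refine le_trans (norm_integral_le_of_norm_le hg ?_) ?_
  · filter_upwards [ae_restrict_mem measurableSet_Ioi] with t ht
    have htpos : 0 < t := ht
    have hbim : ((t:ℂ)/2 - Complex.I * lam).im = -lam := by
      simp
    have hbne : ((t:ℂ)/2 - Complex.I * lam) ≠ 0 := by
      intro h
      rw [h] at hbim
      simp at hbim
      exact absurd hbim.symm (ne_of_lt hlam)
    have hzne : (↑π / ((t:ℂ)/2 - Complex.I * lam)) ≠ 0 :=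
      div_ne_zero (Complex.ofReal_ne_zero.mpr pi_ne_zero) hbne
    have habs : ‖((↑π / ((t:ℂ)/2 - Complex.I * lam)) ^ (1/2 : ℂ))‖ ≤
        Real.sqrt π / Real.sqrt lam := by
      rw [Complex.norm_cpow_of_ne_zero hzne,
        show ((1/2 : ℂ)).im = 0 from by norm_num, mul_zero, Real.exp_zero, div_one,
        show ((1/2 : ℂ)).re = (1/2 : ℝ) from by norm_num]
      have h1 : ‖(↑π / ((t:ℂ)/2 - Complex.I * lam))‖ ≤ π / lam := by
        rw [norm_div, Complex.norm_real, Real.norm_eq_abs, abs_of_pos pi_pos]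
        refine div_le_div_of_nonneg_left pi_pos.le hlam ?_
        calc lam = |(-lam)| := by rw [abs_neg, abs_of_pos hlam]
          _ = |((t:ℂ)/2 - Complex.I * lam).im| := by rw [hbim]
          _ ≤ ‖((t:ℂ)/2 - Complex.I * lam)‖ := Complex.abs_im_le_norm _
      calc ‖(↑π / ((t:ℂ)/2 - Complex.I * lam))‖ ^ (1/2 : ℝ)
          ≤ (π / lam) ^ (1/2 : ℝ) :=
            Real.rpow_le_rpow (norm_nonneg _) h1 (by norm_num)
        _ = Real.sqrt π / Real.sqrt lam := by
            rw [← Real.sqrt_eq_rpow, Real.sqrt_div pi_pos.le]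
    rw [norm_mul]
    have h2 : ‖Complex.exp (-(c:ℂ) * t)‖ = Real.exp (-(c * t)) := by
      rw [Complex.norm_exp]
      congr 1
      simp [Complex.mul_re]
    rw [h2, norm_div]
    calc ‖(↑π / ((t:ℂ)/2 - Complex.I * lam)) ^ (1/2 : ℂ)‖ / ‖(2:ℂ)‖ * Real.exp (-(c * t))
        ≤ (Real.sqrt π / Real.sqrt lam) / 2 * Real.exp (-(c * t)) := by
          have : ‖(2:ℂ)‖ = 2 := by norm_num
          rw [this]
          gcongr
      _ = _ := rfl
  · rw [integral_const_mul]
    rw [show (∫ t in Ioi (0:ℝ), Real.exp (-(c * t))) = c⁻¹ from exp_int hc]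
    have h1 : 0 < Real.sqrt lam := Real.sqrt_pos.mpr hlam
    rw [show Real.sqrt π / Real.sqrt lam / 2 * c⁻¹ = Real.sqrt π / (2 * c * Real.sqrt lam) from by
      field_simp]

end D

noncomputable section E
open Real Set

lemma hkey_lemma {eps x lam m : ℝ} (heps : 0 < eps)
    (hx : eps / (2 * Real.sqrt 2) < |x|) (hx1 : |x| ≤ 1)
    (hlam : 0 < lam) (hm0 : 0 ≤ m) (hmlam : m ≤ lam * (4/3))
    {S : ℝ} (hS : S ≤ 2 * |x|) (hS0 : 0 ≤ S)
    {nJ : ℝ} (hnJ0 : 0 ≤ nJ) (hJ1 : nJ ≤ 1 / (2 * x ^ 2) + 2)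
    (hJ2 : nJ ≤ Real.sqrt π / (2 * (2 * x ^ 2) * Real.sqrt lam)) :
    S * nJ ≤ ((2 * Real.sqrt 2 / eps + 4 + Real.sqrt π * Real.sqrt 2 / eps) * Real.sqrt (7/3)) *
      (1 + m) ^ (-(1:ℝ)/2) := by
  have hs2 : (0:ℝ) < Real.sqrt 2 := by positivity
  have hxpos : 0 < |x| := lt_of_le_of_lt (by positivity) hx
  have hx2 : 0 < x ^ 2 := by
    have := sq_abs x
    nlinarith
  have hcross : eps < |x| * (2 * Real.sqrt 2) := (div_lt_iff₀ (by positivity)).mp hx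
  have hKgap : 2 * Real.sqrt 2 / eps + 4 ≤
      2 * Real.sqrt 2 / eps + 4 + Real.sqrt π * Real.sqrt 2 / eps := by
    have : 0 ≤ Real.sqrt π * Real.sqrt 2 / eps := by positivity
    linarith
  have hKgap2 : Real.sqrt π * Real.sqrt 2 / eps ≤
      2 * Real.sqrt 2 / eps + 4 + Real.sqrt π * Real.sqrt 2 / eps := by
    have : 0 ≤ 2 * Real.sqrt 2 / eps := by positivity
    linarith
  have hsqrt73 : Real.sqrt (7/3) * ((7:ℝ)/3) ^ (-(1:ℝ)/2) = 1 := by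
    rw [show (-(1:ℝ)/2) = -(1/2 : ℝ) by norm_num, Real.rpow_neg (by norm_num),
      ← Real.sqrt_eq_rpow]
    exact mul_inv_cancel₀ (by positivity)
  rcases le_total lam 1 with hl1 | hl1
  · -- lam ≤ 1, so m ≤ 4/3
    have hm43 : m ≤ 4/3 := le_trans hmlam (by nlinarith)
    have h73 : ((7:ℝ)/3) ^ (-(1:ℝ)/2) ≤ (1 + m) ^ (-(1:ℝ)/2) :=
      Real.rpow_le_rpow_of_nonpos (by linarith) (by linarith) (by norm_num)
    have hbase : S * nJ ≤ 2 * Real.sqrt 2 / eps + 4 := by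
      calc S * nJ ≤ (2 * |x|) * (1 / (2 * x ^ 2) + 2) :=
            mul_le_mul hS hJ1 hnJ0 (by positivity)
        _ = 1 / |x| + 4 * |x| := by
            rw [← sq_abs x]
            field_simp
            ring
        _ ≤ 2 * Real.sqrt 2 / eps + 4 := by
            have h4 : 4 * |x| ≤ 4 := by linarith
            have h5 : 1 / |x| ≤ 2 * Real.sqrt 2 / eps := by
              rw [div_le_div_iff₀ hxpos heps]
              nlinarith
            linarith
    calc S * nJ ≤ 2 * Real.sqrt 2 / eps + 4 := hbase
      _ = ((2 * Real.sqrt 2 / eps + 4) * Real.sqrt (7/3)) * ((7:ℝ)/3) ^ (-(1:ℝ)/2) := by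
          rw [mul_assoc, hsqrt73, mul_one]
      _ ≤ _ := by
          refine mul_le_mul ?_ h73 (by positivity) (by positivity)
          exact mul_le_mul_of_nonneg_right hKgap (Real.sqrt_nonneg _)
  · -- 1 ≤ lam
    have h1m : 1 + m ≤ 7/3 * lam := by nlinarith
    have hsl : 0 < Real.sqrt lam := Real.sqrt_pos.mpr hlam
    have h73' : (7/3 * lam) ^ (-(1:ℝ)/2) ≤ (1 + m) ^ (-(1:ℝ)/2) :=
      Real.rpow_le_rpow_of_nonpos (by linarith) h1m (by norm_num)
    have hsplit : (7/3 * lam) ^ (-(1:ℝ)/2) = ((7:ℝ)/3) ^ (-(1:ℝ)/2) * lam ^ (-(1:ℝ)/2) :=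
      Real.mul_rpow (by norm_num) hlam.le
    have hlamrw : lam ^ (-(1:ℝ)/2) ≤ Real.sqrt (7/3) * (1 + m) ^ (-(1:ℝ)/2) := by
      calc lam ^ (-(1:ℝ)/2)
          = Real.sqrt (7/3) * (((7:ℝ)/3) ^ (-(1:ℝ)/2) * lam ^ (-(1:ℝ)/2)) := by
            rw [← mul_assoc, hsqrt73, one_mul]
        _ = Real.sqrt (7/3) * (7/3 * lam) ^ (-(1:ℝ)/2) := by rw [hsplit]
        _ ≤ Real.sqrt (7/3) * (1 + m) ^ (-(1:ℝ)/2) :=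
            mul_le_mul_of_nonneg_left h73' (Real.sqrt_nonneg _)
    have hbase : S * nJ ≤ (Real.sqrt π * Real.sqrt 2 / eps) * lam ^ (-(1:ℝ)/2) := by
      calc S * nJ ≤ (2 * |x|) * (Real.sqrt π / (2 * (2 * x ^ 2) * Real.sqrt lam)) :=
            mul_le_mul hS hJ2 hnJ0 (by positivity)
        _ = Real.sqrt π / (2 * |x|) * (Real.sqrt lam)⁻¹ := by
            rw [← sq_abs x]
            field_simp
        _ ≤ (Real.sqrt π * Real.sqrt 2 / eps) * (Real.sqrt lam)⁻¹ := by
            refine mul_le_mul_of_nonneg_right ?_ (by positivity)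
            rw [div_le_div_iff₀ (by positivity) heps]
            nlinarith [Real.sqrt_nonneg π]
        _ = (Real.sqrt π * Real.sqrt 2 / eps) * lam ^ (-(1:ℝ)/2) := by
            rw [show (-(1:ℝ)/2) = -(1/2 : ℝ) by norm_num, Real.rpow_neg hlam.le,
              ← Real.sqrt_eq_rpow]
    calc S * nJ ≤ (Real.sqrt π * Real.sqrt 2 / eps) * lam ^ (-(1:ℝ)/2) := hbase
      _ ≤ (Real.sqrt π * Real.sqrt 2 / eps) * (Real.sqrt (7/3) * (1 + m) ^ (-(1:ℝ)/2)) :=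
          mul_le_mul_of_nonneg_left hlamrw (by positivity)
      _ = ((Real.sqrt π * Real.sqrt 2 / eps) * Real.sqrt (7/3)) * (1 + m) ^ (-(1:ℝ)/2) := by
          ring
      _ ≤ _ := by
          refine mul_le_mul_of_nonneg_right ?_ (by positivity)
          exact mul_le_mul_of_nonneg_right hKgap2 (Real.sqrt_nonneg _)

end E


noncomputable section
open MeasureTheory Real Set

theorem stmt11 (δ : ℝ) (hδ : 0 ≤ δ) (a : ℝ → ℂ) (ha : IsSymbol0 a)
    (β : ℝ → ℝ) (hβ : ContDiff ℝ (⊤ : ℕ∞) β)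
    (hβs : Function.support β ⊆ Set.Icc (3 / 8) (4 / 3)) :
    ∃ ε₀ : ℝ, 0 < ε₀ ∧ ∀ ε : ℝ, 0 < ε → ε ≤ ε₀ →
      ∀ χ : ℝ → ℝ, ContDiff ℝ (⊤ : ℕ∞) χ → (∀ x, χ (-x) = χ x) →
        Function.support χ ⊆ Set.Icc (-ε) ε →
        (∀ x ∈ Set.Icc (-(ε / 2)) (ε / 2), χ x = 1) →
        ∃ C : ℝ, ∀ (j : ℕ), 1 ≤ j → ∀ r₁ r₂ : ℝ, 0 < r₁ → 0 < r₂ →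
          ∀ θ₁ ∈ Set.Ico (0 : ℝ) (2 * Real.pi), ∀ θ₂ ∈ Set.Ico (0 : ℝ) (2 * Real.pi),
            ‖((1 - χ (bb (θ₁ - θ₂)) : ℝ) : ℂ) * Hker δ a β j r₁ r₂ (θ₁ - θ₂)‖ ≤
              C * (2 : ℝ) ^ (-(j : ℝ) * (3 / 2 + δ)) *
                (1 + (2 : ℝ) ^ (j : ℝ) * r₁ * r₂) ^ (-(1 : ℝ) / 2) := by
  refine ⟨1, one_pos, fun ε hε hεle χ hχ hχe hχs hχ1 => ?_⟩
  obtain ⟨-, ⟨Ma, hMa⟩, -⟩ := ha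
  have hMa0 : 0 ≤ Ma := le_trans (norm_nonneg _) (hMa 1 one_pos)
  have hχcs : HasCompactSupport χ :=
    HasCompactSupport.intro (isCompact_Icc (a := -ε) (b := ε)) (fun y hy => by
      by_contra h
      exact hy (hχs (Function.mem_support.mpr h)))
  obtain ⟨Mχ, hMχ⟩ := hχ.continuous.bounded_above_of_compact_support hχcs
  have hMχ0 : 0 ≤ Mχ := le_trans (norm_nonneg _) (hMχ 0)
  have hβcs : HasCompactSupport β :=
    HasCompactSupport.intro (isCompact_Icc (a := (3:ℝ)/8) (b := 4/3)) (fun y hy => by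
      by_contra h
      exact hy (hβs (Function.mem_support.mpr h)))
  obtain ⟨Mβ, hMβ⟩ := hβ.continuous.bounded_above_of_compact_support hβcs
  have hMβ0 : 0 ≤ Mβ := le_trans (norm_nonneg _) (hMβ 0)
  have hKδ0 : (0:ℝ) < ((3:ℝ)/8) ^ (-(3/2+δ)) := Real.rpow_pos_of_pos (by norm_num) _
  have hKK0 : (0:ℝ) ≤ (2 * Real.sqrt 2 / ε + 4 + Real.sqrt π * Real.sqrt 2 / ε) *
      Real.sqrt (7/3) := by positivity
  refine ⟨(1+Mχ) * Mβ * (((3:ℝ)/8) ^ (-(3/2+δ))) * Ma *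
    ((2 * Real.sqrt 2 / ε + 4 + Real.sqrt π * Real.sqrt 2 / ε) * Real.sqrt (7/3)), ?_⟩
  intro j hj r₁ r₂ hr₁ hr₂ θ₁ hθ₁ θ₂ hθ₂
  have hC0 : (0:ℝ) ≤ (1+Mχ) * Mβ * (((3:ℝ)/8) ^ (-(3/2+δ))) * Ma *
      ((2 * Real.sqrt 2 / ε + 4 + Real.sqrt π * Real.sqrt 2 / ε) * Real.sqrt (7/3)) := by
    have h1 : (0:ℝ) ≤ 1 + Mχ := by linarith
    positivity
  have hP : (0:ℝ) < (2:ℝ) ^ (-(j:ℝ)*(3/2+δ)) := Real.rpow_pos_of_pos two_pos _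
  have hmr : (0:ℝ) < (1 + (2:ℝ)^(j:ℝ) * r₁ * r₂) ^ (-(1:ℝ)/2) := by
    have : (0:ℝ) < 1 + (2:ℝ)^(j:ℝ) * r₁ * r₂ := by positivity
    exact Real.rpow_pos_of_pos this _
  have hRHS0 : (0:ℝ) ≤ (1+Mχ) * Mβ * (((3:ℝ)/8) ^ (-(3/2+δ))) * Ma *
      ((2 * Real.sqrt 2 / ε + 4 + Real.sqrt π * Real.sqrt 2 / ε) * Real.sqrt (7/3)) *
      (2:ℝ) ^ (-(j:ℝ)*(3/2+δ)) * (1 + (2:ℝ)^(j:ℝ) * r₁ * r₂) ^ (-(1:ℝ)/2) :=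
    mul_nonneg (mul_nonneg hC0 hP.le) hmr.le
  set φ := θ₁ - θ₂ with hφ
  by_cases hchi : χ (bb φ) = 1
  · rw [hchi]
    simp only [sub_self, Complex.ofReal_zero, zero_mul, norm_zero]
    exact hRHS0
  by_cases hbz : β (r₁ + r₂) = 0
  · rw [show Hker δ a β j r₁ r₂ φ = 0 from by unfold Hker; rw [hbz]; simp]
    simp only [mul_zero, norm_zero]
    exact hRHS0
  have hrs : r₁ + r₂ ∈ Icc (3/8:ℝ) (4/3) := hβs (Function.mem_support.mpr hbz)
  have hrs0 : (0:ℝ) < r₁ + r₂ := by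
    have := hrs.1
    linarith
  have hbbout : bb φ ∉ Icc (-(ε/2)) (ε/2) := fun h => hchi (hχ1 _ h)
  have habsbb : ε/2 < |bb φ| := by
    rw [mem_Icc, not_and_or] at hbbout
    rcases hbbout with h | h
    · push_neg at h
      rw [lt_abs]
      right
      linarith
    · push_neg at h
      rw [lt_abs]
      left
      linarith
  have hs2 : (0:ℝ) < Real.sqrt 2 := by positivity
  have hxabs : ε / (2 * Real.sqrt 2) < |Real.sin ((φ + π)/2)| := by
    have hbbabs : |bb φ| = Real.sqrt 2 * |Real.sin ((φ + π)/2)| := by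
      unfold bb
      rw [abs_mul, abs_of_pos hs2]
    rw [div_lt_iff₀ (by positivity)]
    rw [hbbabs] at habsbb
    nlinarith
  have hx1 : |Real.sin ((φ + π)/2)| ≤ 1 :=
    abs_le.mpr ⟨Real.neg_one_le_sin _, Real.sin_le_one _⟩
  have hx0 : 0 < |Real.sin ((φ + π)/2)| := lt_of_le_of_lt (by positivity) hxabs
  have hx20 : 0 < Real.sin ((φ + π)/2) ^ 2 := by
    rw [← sq_abs]
    positivity
  have hc : (0:ℝ) < 2 * Real.sin ((φ + π)/2) ^ 2 := by positivity
  have hlam : (0:ℝ) < (2:ℝ)^(j:ℝ) * (r₁ * r₂ / (r₁ + r₂)) :=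
    mul_pos (Real.rpow_pos_of_pos two_pos _) (div_pos (mul_pos hr₁ hr₂) hrs0)
  have hmeq : (2:ℝ)^(j:ℝ) * r₁ * r₂ =
      ((2:ℝ)^(j:ℝ) * (r₁ * r₂ / (r₁ + r₂))) * (r₁ + r₂) := by
    field_simp
  have hmlam : (2:ℝ)^(j:ℝ) * r₁ * r₂ ≤ ((2:ℝ)^(j:ℝ) * (r₁ * r₂ / (r₁ + r₂))) * (4/3) := by
    rw [hmeq]
    exact mul_le_mul_of_nonneg_left hrs.2 hlam.le
  have hm0 : (0:ℝ) ≤ (2:ℝ)^(j:ℝ) * r₁ * r₂ := by positivity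
  -- rewrite the kernel integral
  have hintg : ∀ s : ℝ,
      Complex.exp (Complex.I *
        (((2 : ℝ) ^ (j : ℝ) * (r₁ * r₂ / (r₁ + r₂)) * s ^ 2 : ℝ) : ℂ)) *
        psi3m δ a j r₁ r₂ φ s =
      ((((r₁ + r₂) ^ (-(3 / 2 + δ)) : ℝ) : ℂ) * a ((2 : ℝ) ^ (j : ℝ) * (r₁ + r₂)) *
          ((Real.sin (φ + π) : ℝ) : ℂ)) *
        (Complex.exp (Complex.I * (((2:ℝ)^(j:ℝ) * (r₁ * r₂ / (r₁ + r₂)) : ℝ):ℂ) * (s:ℂ) ^ 2) *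
          (((s ^ 2 / 2 + 2 * Real.sin ((φ + π) / 2) ^ 2)⁻¹ : ℝ) : ℂ)) := by
    intro s
    rw [show (Complex.I *
        (((2 : ℝ) ^ (j : ℝ) * (r₁ * r₂ / (r₁ + r₂)) * s ^ 2 : ℝ) : ℂ)) =
        Complex.I * (((2:ℝ)^(j:ℝ) * (r₁ * r₂ / (r₁ + r₂)) : ℝ):ℂ) * (s:ℂ) ^ 2 from by
      push_cast
      ring]
    unfold psi3m
    push_cast
    ring
  have hHeq : Hker δ a β j r₁ r₂ φ =
      (((2 : ℝ) ^ (-(j : ℝ) * (3 / 2 + δ)) : ℝ) : ℂ) * ((β (r₁ + r₂) : ℝ) : ℂ) *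
        (((((r₁ + r₂) ^ (-(3 / 2 + δ)) : ℝ) : ℂ) * a ((2 : ℝ) ^ (j : ℝ) * (r₁ + r₂)) *
          ((Real.sin (φ + π) : ℝ) : ℂ)) *
        ∫ s in Ioi (0:ℝ),
          Complex.exp (Complex.I * (((2:ℝ)^(j:ℝ) * (r₁ * r₂ / (r₁ + r₂)) : ℝ):ℂ) * (s:ℂ) ^ 2) *
            (((s ^ 2 / 2 + 2 * Real.sin ((φ + π) / 2) ^ 2)⁻¹ : ℝ) : ℂ)) := by
    unfold Hker
    congr 1
    rw [show (fun s : ℝ => Complex.exp (Complex.I *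
        (((2 : ℝ) ^ (j : ℝ) * (r₁ * r₂ / (r₁ + r₂)) * s ^ 2 : ℝ) : ℂ)) *
        psi3m δ a j r₁ r₂ φ s) = fun s : ℝ =>
      ((((r₁ + r₂) ^ (-(3 / 2 + δ)) : ℝ) : ℂ) * a ((2 : ℝ) ^ (j : ℝ) * (r₁ + r₂)) *
          ((Real.sin (φ + π) : ℝ) : ℂ)) *
        (Complex.exp (Complex.I * (((2:ℝ)^(j:ℝ) * (r₁ * r₂ / (r₁ + r₂)) : ℝ):ℂ) * (s:ℂ) ^ 2) *
          (((s ^ 2 / 2 + 2 * Real.sin ((φ + π) / 2) ^ 2)⁻¹ : ℝ) : ℂ)) from funext hintg]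
    exact integral_const_mul _ _
  have hJ1 := key_triv (c := 2 * Real.sin ((φ + π)/2) ^ 2)
    ((2:ℝ)^(j:ℝ) * (r₁ * r₂ / (r₁ + r₂))) hc
  have hJ2 := key_dec (c := 2 * Real.sin ((φ + π)/2) ^ 2)
    (lam := (2:ℝ)^(j:ℝ) * (r₁ * r₂ / (r₁ + r₂))) hc hlam
  have hsin : |Real.sin (φ + π)| ≤ 2 * |Real.sin ((φ + π)/2)| := by
    have h2 : Real.sin (φ + π) = 2 * Real.sin ((φ + π)/2) * Real.cos ((φ + π)/2) := by
      have h3 := Real.sin_two_mul ((φ + π)/2)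
      rw [show 2 * ((φ + π)/2) = φ + π by ring] at h3
      exact h3
    rw [h2, abs_mul, abs_mul]
    have hcos : |Real.cos ((φ + π)/2)| ≤ 1 :=
      abs_le.mpr ⟨Real.neg_one_le_cos _, Real.cos_le_one _⟩
    calc |(2:ℝ)| * |Real.sin ((φ + π)/2)| * |Real.cos ((φ + π)/2)|
        ≤ |(2:ℝ)| * |Real.sin ((φ + π)/2)| * 1 :=
          mul_le_mul_of_nonneg_left hcos (by positivity)
      _ = 2 * |Real.sin ((φ + π)/2)| := by
          rw [mul_one, abs_of_pos two_pos]
  have hkey := hkey_lemma hε hxabs hx1 hlam hm0 hmlam hsin (abs_nonneg _) (norm_nonneg _) hJ1 hJ2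
  have hRpos : (0:ℝ) < (r₁ + r₂) ^ (-(3/2+δ)) := Real.rpow_pos_of_pos hrs0 _
  have hb1 : |1 - χ (bb φ)| ≤ 1 + Mχ := by
    rw [← Real.norm_eq_abs]
    calc ‖1 - χ (bb φ)‖ ≤ ‖(1:ℝ)‖ + ‖χ (bb φ)‖ := norm_sub_le _ _
      _ ≤ 1 + Mχ := by
          have := hMχ (bb φ)
          rw [norm_one]
          linarith
  have hb2 : (r₁ + r₂) ^ (-(3/2+δ)) ≤ ((3:ℝ)/8) ^ (-(3/2+δ)) :=
    Real.rpow_le_rpow_of_nonpos (by norm_num) hrs.1 (by linarith)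
  have hb3 : |β (r₁ + r₂)| ≤ Mβ := by
    have := hMβ (r₁ + r₂)
    rwa [Real.norm_eq_abs] at this
  have hb4 : ‖a ((2:ℝ)^(j:ℝ) * (r₁ + r₂))‖ ≤ Ma := hMa _ (by positivity)
  have e1 : ‖((1 - χ (bb φ) : ℝ) : ℂ) * Hker δ a β j r₁ r₂ φ‖ =
      |1 - χ (bb φ)| * ‖Hker δ a β j r₁ r₂ φ‖ := by
    rw [norm_mul, Complex.norm_real, Real.norm_eq_abs]
  have e2 : ‖Hker δ a β j r₁ r₂ φ‖ =
      (2:ℝ) ^ (-(j:ℝ) * (3/2+δ)) * (|β (r₁ + r₂)| *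
        ((r₁ + r₂) ^ (-(3/2+δ)) * ‖a ((2:ℝ)^(j:ℝ) * (r₁ + r₂))‖ *
          (|Real.sin (φ + π)| *
            ‖∫ s in Ioi (0:ℝ),
              Complex.exp (Complex.I * (((2:ℝ)^(j:ℝ) * (r₁ * r₂ / (r₁ + r₂)) : ℝ):ℂ) * (s:ℂ) ^ 2) *
                (((s ^ 2 / 2 + 2 * Real.sin ((φ + π) / 2) ^ 2)⁻¹ : ℝ) : ℂ)‖))) := by
    rw [hHeq]
    simp only [norm_mul, Complex.norm_real, Real.norm_eq_abs]
    rw [abs_of_pos hP, abs_of_pos hRpos]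
    ring
  rw [e1, e2]
  have hSNJnn : (0:ℝ) ≤ |Real.sin (φ + π)| *
      ‖∫ s in Ioi (0:ℝ),
        Complex.exp (Complex.I * (((2:ℝ)^(j:ℝ) * (r₁ * r₂ / (r₁ + r₂)) : ℝ):ℂ) * (s:ℂ) ^ 2) *
          (((s ^ 2 / 2 + 2 * Real.sin ((φ + π) / 2) ^ 2)⁻¹ : ℝ) : ℂ)‖ :=
    mul_nonneg (abs_nonneg _) (norm_nonneg _)
  have inner2 := mul_le_mul (mul_le_mul hb2 hb4 (norm_nonneg _) hKδ0.le) hkey hSNJnn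
    (mul_nonneg hKδ0.le hMa0)
  have inner1 := mul_le_mul hb3 inner2
    (mul_nonneg (mul_nonneg hRpos.le (norm_nonneg _)) hSNJnn) hMβ0
  have inner0 := mul_le_mul_of_nonneg_left inner1 hP.le
  have total := mul_le_mul hb1 inner0
    (mul_nonneg hP.le (mul_nonneg (abs_nonneg _)
      (mul_nonneg (mul_nonneg hRpos.le (norm_nonneg _)) hSNJnn)))
    (by linarith)
  calc _ ≤ _ := total
    _ = (1+Mχ) * Mβ * (((3:ℝ)/8) ^ (-(3/2+δ))) * Ma *
        ((2 * Real.sqrt 2 / ε + 4 + Real.sqrt π * Real.sqrt 2 / ε) * Real.sqrt (7/3)) *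
        (2:ℝ) ^ (-(j:ℝ) * (3/2+δ)) *
        (1 + (2:ℝ)^(j:ℝ) * r₁ * r₂) ^ (-(1:ℝ)/2) := by ring

end
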